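/- arXiv:2112.15414 — 7 statements merged into one kernel-verified Lean document; each statement's English description precedes it below -/
import Mathlib

section
/- For every real y > 0, the hyperbolic cotangent satisfies the two-sided bound max(1, y) ≤ y·coth(y) ≤ 1 + y. -/
lemma sinh_le_mul_cosh (y : ℝ) (hy : 0 ≤ y) : Real.sinh y ≤ y * Real.cosh y := by
  have key : MonotoneOn (fun x : ℝ => x * Real.cosh x - Real.sinh x) (Set.Ici 0) := by
    apply monotoneOn_of_deriv_nonneg (convex_Ici 0)
    · fun_prop
    · intro x hx
      exact (((hasDerivAt_id x).mul (Real.hasDerivAt_cosh x)).sub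
        (Real.hasDerivAt_sinh x)).differentiableAt.differentiableWithinAt
    · intro x hx
      simp only [interior_Ici, Set.mem_Ioi] at hx
      have h : HasDerivAt (fun x : ℝ => x * Real.cosh x - Real.sinh x)
          (1 * Real.cosh x + x * Real.sinh x - Real.cosh x) x := by
        exact (((hasDerivAt_id' x).mul (Real.hasDerivAt_cosh x)).sub
          (Real.hasDerivAt_sinh x))
      rw [h.deriv]
      have : 0 ≤ Real.sinh x := Real.sinh_nonneg_iff.2 hx.le
      nlinarith
  have h0 := key (Set.self_mem_Ici) (Set.mem_Ici.2 hy) hy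
  simpa using h0

/-- The hyperbolic cotangent. -/
noncomputable def coth (y : ℝ) : ℝ := Real.cosh y / Real.sinh y

/-- For every real `y > 0`, `max 1 y ≤ y * coth y ≤ 1 + y`. -/
theorem coth_two_sided_bound (y : ℝ) (hy : 0 < y) :
    max 1 y ≤ y * coth y ∧ y * coth y ≤ 1 + y := by
  have hs : 0 < Real.sinh y := Real.sinh_pos_iff.2 hy
  have hsc : Real.sinh y < Real.cosh y := Real.sinh_lt_cosh y
  rw [coth, mul_div_assoc']
  constructor
  · rw [max_le_iff]
    constructor
    · rw [le_div_iff₀ hs, one_mul]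
      exact sinh_le_mul_cosh y hy.le
    · rw [le_div_iff₀ hs]
      nlinarith
  · rw [div_le_iff₀ hs]
    have he : 0 < Real.exp y := Real.exp_pos y
    have h1 : 2 * y + 1 ≤ Real.exp (2 * y) := Real.add_one_le_exp _
    have h2 : Real.exp (2 * y) = Real.exp y * Real.exp y := by
      rw [two_mul, Real.exp_add]
    rw [h2] at h1
    have hc : 2 * Real.exp y * Real.cosh y = Real.exp y * Real.exp y + 1 := by
      rw [Real.cosh_eq, Real.exp_neg]
      field_simp
    have hsi : 2 * Real.exp y * Real.sinh y = Real.exp y * Real.exp y - 1 := by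
      rw [Real.sinh_eq, Real.exp_neg]
      field_simp
    rw [← mul_le_mul_iff_of_pos_left (by positivity : (0:ℝ) < 2 * Real.exp y)]
    rw [mul_comm (2 * Real.exp y) (y * Real.cosh y), mul_comm (2 * Real.exp y) ((1 + y) * Real.sinh y)]
    calc y * Real.cosh y * (2 * Real.exp y) = y * (2 * Real.exp y * Real.cosh y) := by ring
    _ = y * (Real.exp y * Real.exp y + 1) := by rw [hc]
    _ ≤ (1 + y) * (Real.exp y * Real.exp y - 1) := by nlinarith
    _ = (1 + y) * (2 * Real.exp y * Real.sinh y) := by rw [hsi]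
    _ = (1 + y) * Real.sinh y * (2 * Real.exp y) := by ring
end

section
/- Let γ ∈ (0,1) and a ≤ 0, and define g(x) = 1/γ − (1/γ²)·x·coth(x) − (a/γ)·x² + (x²/γ³)·coth²(x) for x > 0. Then g(x) > 0 for all x > 0, and g is strictly increasing on (0,∞) (its derivative satisfies g′(x) > 0 for x > 0). -/
/-- The coefficient function `g` of the linearized Boussinesq/Full dispersion system. -/
noncomputable def g (γ a x : ℝ) : ℝ :=
  1 / γ - (1 / γ ^ 2) * (x * coth x) - (a / γ) * x ^ 2 + (x ^ 2 / γ ^ 3) * (coth x) ^ 2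

lemma sinh_lt_mul_cosh {x : ℝ} (hx : 0 < x) : Real.sinh x < x * Real.cosh x := by
  have h : StrictMonoOn (fun y => y * Real.cosh y - Real.sinh y) (Set.Ici 0) := by
    apply strictMonoOn_of_deriv_pos (convex_Ici 0)
    · exact ((continuous_id.mul Real.continuous_cosh).sub Real.continuous_sinh).continuousOn
    · intro y hy
      rw [interior_Ici, Set.mem_Ioi] at hy
      have hd : HasDerivAt (fun y => y * Real.cosh y - Real.sinh y) (y * Real.sinh y) y := by
        have := ((hasDerivAt_id y).mul (Real.hasDerivAt_cosh y)).sub (Real.hasDerivAt_sinh y)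
        refine this.congr_deriv ?_
        show 1 * Real.cosh y + y * Real.sinh y - Real.cosh y = y * Real.sinh y
        ring
      rw [hd.deriv]
      exact mul_pos hy (Real.sinh_pos_iff.mpr hy)
  have := h Set.self_mem_Ici (Set.mem_Ici.2 hx.le) hx
  simpa using this

lemma lt_sinh_mul_cosh {x : ℝ} (hx : 0 < x) : x < Real.sinh x * Real.cosh x := by
  have h1 : 2 * x < Real.sinh (2 * x) := Real.self_lt_sinh_iff.2 (by linarith)
  rw [Real.sinh_two_mul] at h1
  linarith

lemma coth_hasDerivAt {x : ℝ} (hx : x ≠ 0) : HasDerivAt coth (1 - coth x ^ 2) x := by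
  have hs : Real.sinh x ≠ 0 := Real.sinh_ne_zero.2 hx
  have H := (Real.hasDerivAt_cosh x).div (Real.hasDerivAt_sinh x) hs
  refine HasDerivAt.congr_deriv (f := fun y => Real.cosh y / Real.sinh y) H ?_
  have hid : Real.cosh x ^ 2 - Real.sinh x ^ 2 = 1 := Real.cosh_sq_sub_sinh_sq x
  unfold coth
  field_simp

lemma g_hasDerivAt (γ a : ℝ) {x : ℝ} (hx : x ≠ 0) (hγ : γ ≠ 0) :
    HasDerivAt (g γ a)
      ((coth x + x * (1 - coth x ^ 2)) * (2 * (x * coth x) - γ) / γ ^ 3 + (-a) * (2 * x) / γ) x := by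
  have hc := coth_hasDerivAt hx
  have H : HasDerivAt (fun y => 1 / γ - (1 / γ ^ 2) * (y * coth y) - (a / γ) * y ^ 2
      + (y ^ 2 / γ ^ 3) * (coth y) ^ 2)
      (0 - (1 / γ ^ 2) * (1 * coth x + x * (1 - coth x ^ 2)) - (a / γ) * (2 * x ^ 1)
        + ((2 * x ^ 1) / γ ^ 3 * (coth x) ^ 2
          + (x ^ 2 / γ ^ 3) * (2 * coth x ^ 1 * (1 - coth x ^ 2)))) x := by
    exact (((hasDerivAt_const x (1 / γ)).sub (((hasDerivAt_id x).mul hc).const_mul (1 / γ ^ 2))).sub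
      ((hasDerivAt_pow 2 x).const_mul (a / γ))).add
      (((hasDerivAt_pow 2 x).div_const (γ ^ 3)).mul (hc.pow 2))
  refine H.congr_deriv ?_
  field_simp
  ring

lemma coth_facts {x : ℝ} (hx : 0 < x) :
    1 < coth x ∧ 1 < x * coth x ∧ 0 < coth x + x * (1 - coth x ^ 2) := by
  have hs : 0 < Real.sinh x := Real.sinh_pos_iff.2 hx
  have hid : Real.cosh x ^ 2 - Real.sinh x ^ 2 = 1 := Real.cosh_sq_sub_sinh_sq x
  refine ⟨(one_lt_div hs).2 (Real.sinh_lt_cosh x), ?_, ?_⟩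
  · rw [coth, mul_div_assoc']
    exact (one_lt_div hs).2 (sinh_lt_mul_cosh hx)
  · have key : coth x + x * (1 - coth x ^ 2)
        = (Real.sinh x * Real.cosh x - x) / (Real.sinh x) ^ 2 := by
      unfold coth
      field_simp
      linear_combination (-x) * hid
    rw [key]
    exact div_pos (sub_pos.2 (lt_sinh_mul_cosh hx)) (pow_pos hs 2)

/-- For `γ ∈ (0,1)` and `a ≤ 0`, the function `g` is positive and strictly increasing on
`(0, ∞)`, with positive derivative there. -/
theorem g_pos_and_strictMono (γ a : ℝ) (hγ : γ ∈ Set.Ioo (0 : ℝ) 1) (ha : a ≤ 0) :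
    (∀ x > 0, 0 < g γ a x) ∧ StrictMonoOn (g γ a) (Set.Ioi 0) ∧
      ∀ x > 0, 0 < deriv (g γ a) x := by
  obtain ⟨hγ0, hγ1⟩ := hγ
  have hderiv : ∀ x > 0, 0 < deriv (g γ a) x := by
    intro x hx
    obtain ⟨hc1, hxc, ht'⟩ := coth_facts hx
    rw [(g_hasDerivAt γ a hx.ne' hγ0.ne').deriv]
    have h2 : 0 < 2 * (x * coth x) - γ := by linarith
    exact add_pos_of_pos_of_nonneg
      (div_pos (mul_pos ht' h2) (pow_pos hγ0 3))
      (div_nonneg (mul_nonneg (neg_nonneg.2 ha) (by linarith)) hγ0.le)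
  refine ⟨?_, ?_, hderiv⟩
  · intro x hx
    obtain ⟨hc1, hxc, -⟩ := coth_facts hx
    have hg : g γ a x = (γ ^ 2 - γ * (x * coth x) + (x * coth x) ^ 2) / γ ^ 3
        + (-a) * x ^ 2 / γ := by
      unfold g
      field_simp
      ring
    rw [hg]
    refine add_pos_of_pos_of_nonneg (div_pos ?_ (pow_pos hγ0 3))
      (div_nonneg (mul_nonneg (neg_nonneg.2 ha) (sq_nonneg x)) hγ0.le)
    nlinarith [sq_nonneg (2 * (x * coth x) - γ), mul_pos hγ0 hγ0]
  · refine strictMonoOn_of_deriv_pos (convex_Ioi 0) (fun x hx => ?_) (fun x hx => ?_)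
    · exact ((g_hasDerivAt γ a (ne_of_gt hx) hγ0.ne').continuousAt).continuousWithinAt
    · rw [interior_Ioi] at hx
      exact hderiv x hx
end

section
/- Let a < 0, μ > 0, μ₂ > 0 and set ν = sqrt(μ/μ₂). Suppose ν < (3 + |a|)/(4 + |a|). Define the cubic polynomial P(γ) = γ³ − ν·γ² + (3/(4|a|))·γ − ν/|a|. Then there exists γ* ∈ (0,1) such that P(γ*) = 0 and, for every γ ∈ (γ*, 1), one has sqrt(μ/μ₂) < γ(3 − 4aγ²)/(4(1 − aγ²)). -/
/-- For `a < 0`, `μ, μ₂ > 0` with `ν = √(μ/μ₂) < (3 + |a|)/(4 + |a|)`, the cubic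
`P(γ) = γ³ - ν γ² + (3/(4|a|)) γ - ν/|a|` has a root `γ* ∈ (0,1)`, and the
solitary-wave condition `√(μ/μ₂) < γ(3 - 4aγ²)/(4(1 - aγ²))` holds on `(γ*, 1)`. -/
theorem exists_gamma_star (a μ μ₂ : ℝ) (ha : a < 0) (hμ : 0 < μ) (hμ₂ : 0 < μ₂)
    (hν : Real.sqrt (μ / μ₂) < (3 + |a|) / (4 + |a|)) :
    ∃ γstar ∈ Set.Ioo (0 : ℝ) 1,
      (γstar ^ 3 - Real.sqrt (μ / μ₂) * γstar ^ 2 + (3 / (4 * |a|)) * γstar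
          - Real.sqrt (μ / μ₂) / |a| = 0) ∧
      ∀ γ ∈ Set.Ioo γstar 1,
        Real.sqrt (μ / μ₂) < γ * (3 - 4 * a * γ ^ 2) / (4 * (1 - a * γ ^ 2)) := by
  set ν := Real.sqrt (μ / μ₂) with hνdef
  set b := |a| with hbdef
  have hb : 0 < b := abs_pos.mpr ha.ne
  have hab : b = -a := abs_of_neg ha
  have hν0 : 0 < ν := Real.sqrt_pos.mpr (div_pos hμ hμ₂)
  -- ν < 1
  have hν1 : ν < 1 := lt_of_lt_of_le hν (by rw [div_le_one (by linarith)]; linarith)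
  -- scaled cubic g
  set g : ℝ → ℝ := fun x => 4 * b * x ^ 3 - 4 * b * ν * x ^ 2 + 3 * x - 4 * ν with hgdef
  have hg : Continuous g := by continuity
  have hg0 : g 0 < 0 := by simp [hgdef]; nlinarith
  have hν' : ν * (4 + b) < 3 + b := by
    have h4b : (0:ℝ) < 4 + b := by linarith
    rw [lt_div_iff₀ h4b] at hν
    exact hν
  have hg1 : 0 < g 1 := by
    simp only [hgdef, one_pow, mul_one]
    nlinarith [mul_nonneg hb.le (sub_nonneg.2 hν1.le)]
  -- root set
  set R : Set ℝ := Set.Icc (0:ℝ) 1 ∩ g ⁻¹' {0} with hRdef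
  have hRc : IsCompact R := isCompact_Icc.inter_right (isClosed_singleton.preimage hg)
  have hRne : R.Nonempty := by
    have h := intermediate_value_Icc (zero_le_one) hg.continuousOn
    have h0 : (0:ℝ) ∈ Set.Icc (g 0) (g 1) := ⟨hg0.le, hg1.le⟩
    obtain ⟨c, hc, hgc⟩ := h h0
    exact ⟨c, hc, hgc⟩
  obtain ⟨hγmem, hγroot⟩ := hRc.sSup_mem hRne
  set γs := sSup R with hγsdef
  have hgγs : g γs = 0 := hγroot
  have hγs0 : 0 < γs := by
    rcases lt_or_eq_of_le hγmem.1 with h | h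
    · exact h
    · exfalso; rw [← h] at hgγs; linarith [hg0, hgγs.le]
  have hγs1 : γs < 1 := by
    rcases lt_or_eq_of_le hγmem.2 with h | h
    · exact h
    · exfalso; rw [h] at hgγs; linarith
  refine ⟨γs, ⟨hγs0, hγs1⟩, ?_, ?_⟩
  · -- root equation
    have hb' : b ≠ 0 := hb.ne'
    have : 4 * b * γs ^ 3 - 4 * b * ν * γs ^ 2 + 3 * γs - 4 * ν = 0 := hgγs
    field_simp
    linear_combination this
  · intro γ hγ
    have hγgt : γs < γ := hγ.1
    have hγlt : γ < 1 := hγ.2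
    -- g γ > 0
    have hgγ : 0 < g γ := by
      by_contra h
      push_neg at h
      have hIVT := intermediate_value_Icc hγlt.le hg.continuousOn
      have h0 : (0:ℝ) ∈ Set.Icc (g γ) (g 1) := ⟨h, hg1.le⟩
      obtain ⟨c, hc, hgc⟩ := hIVT h0
      have hcR : c ∈ R := ⟨⟨le_trans (le_trans hγs0.le hγgt.le) hc.1, hc.2⟩, hgc⟩
      have : c ≤ γs := le_csSup hRc.bddAbove hcR
      linarith [hc.1]
    have hden : 0 < 4 * (1 - a * γ ^ 2) := by nlinarith [sq_nonneg γ]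
    rw [lt_div_iff₀ hden]
    have hgγ' : 0 < 4 * b * γ ^ 3 - 4 * b * ν * γ ^ 2 + 3 * γ - 4 * ν := hgγ
    nlinarith [hgγ', hab]
end

section
/- Let γ ∈ (0,1), a ≤ 0, μ > 0, μ₂ > 0, and define l(k) = 1/γ − (√μ/γ²)·|k|·coth(√μ₂·|k|) − (μ/γ)·( a − (1/γ²)·coth²(√μ₂·|k|) )·k² for real k ≠ 0, and l(0) = 1/γ − √μ/(γ²·√μ₂) + μ/(γ³·μ₂). Then l(k) ≥ 3/(4γ) for every real k. -/
/-- The Fourier symbol `l(k)` of the nonlocal operator `L_{μ₂}`, with the limit value at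
`k = 0`. -/
noncomputable def lSym (γ a μ μ₂ k : ℝ) : ℝ :=
  if k = 0 then
    1 / γ - Real.sqrt μ / (γ ^ 2 * Real.sqrt μ₂) + μ / (γ ^ 3 * μ₂)
  else
    1 / γ - (Real.sqrt μ / γ ^ 2) * (|k| * coth (Real.sqrt μ₂ * |k|))
      - (μ / γ) * (a - (1 / γ ^ 2) * (coth (Real.sqrt μ₂ * |k|)) ^ 2) * k ^ 2

lemma quad_lb (γ x : ℝ) (hγ : 0 < γ) : 3 / (4 * γ) ≤ (1 - x + x ^ 2) / γ := by
  rw [div_le_div_iff₀ (by positivity) hγ]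
  nlinarith [mul_nonneg (sq_nonneg (x - 1 / 2)) hγ.le]

/-- For `γ ∈ (0,1)`, `a ≤ 0`, `μ, μ₂ > 0`, the symbol of `L_{μ₂}` satisfies
`l(k) ≥ 3/(4γ)` for every real `k`. -/
theorem lSym_lower_bound (γ a μ μ₂ : ℝ) (hγ : γ ∈ Set.Ioo (0 : ℝ) 1) (ha : a ≤ 0)
    (hμ : 0 < μ) (hμ₂ : 0 < μ₂) :
    ∀ k : ℝ, 3 / (4 * γ) ≤ lSym γ a μ μ₂ k := by
  obtain ⟨hγ0, _⟩ := hγ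
  have hγne : γ ≠ 0 := ne_of_gt hγ0
  intro k
  unfold lSym
  set s := Real.sqrt μ with hs
  set t := Real.sqrt μ₂ with ht
  have hμs : s ^ 2 = μ := Real.sq_sqrt hμ.le
  have hμ2s : t ^ 2 = μ₂ := Real.sq_sqrt hμ₂.le
  have htpos : 0 < t := Real.sqrt_pos.mpr hμ₂
  split_ifs with hk
  · rw [← hμs, ← hμ2s]
    have heq : (1 - s / (γ * t) + (s / (γ * t)) ^ 2) / γ
        = 1 / γ - s / (γ ^ 2 * t) + s ^ 2 / (γ ^ 3 * t ^ 2) := by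
      field_simp
    linarith [heq ▸ quad_lb γ (s / (γ * t)) hγ0]
  · rw [← hμs]
    set c := coth (t * |k|) with hc
    set m := |k| with hm
    have hk2 : m ^ 2 = k ^ 2 := sq_abs k
    have hterm : 0 ≤ (s ^ 2 / γ) * (-a) * k ^ 2 := by
      have : 0 ≤ -a := by linarith
      positivity
    have heq : 1 / γ - (s / γ ^ 2) * (m * c) - (s ^ 2 / γ) * (a - (1 / γ ^ 2) * c ^ 2) * k ^ 2
        = (1 - s * m * c / γ + (s * m * c / γ) ^ 2) / γ + (s ^ 2 / γ) * (-a) * k ^ 2 := by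
      rw [← hk2]
      field_simp
      ring
    rw [heq]
    linarith [quad_lb γ (s * m * c / γ) hγ0]
end

section
/- Let γ ∈ (0,1), b > 0, c < 0, a ≤ 0, μ > 0, μ₂ > 0. Define j_b(k) = 1 + μ b k², j_c(k) = 1 + μ|c| k², l(k) = 1/γ − (√μ/γ²)·|k|·coth(√μ₂·|k|) − (μ/γ)·( a − (1/γ²)·coth²(√μ₂·|k|) )·k² for k ≠ 0 with l(0) = 1/γ − √μ/(γ²·√μ₂) + μ/(γ³·μ₂), and R_γ(x) = (1 − γ)·j_c(x)·l(x)/j_b(x)². Then there exists m > 0 such that R_γ(x) ≥ m for all x ≥ 0. -/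
/-- The symbol of `J_b = 1 - μ b ∂ₓ²`. -/
def jb (μ b k : ℝ) : ℝ := 1 + μ * b * k ^ 2

/-- The symbol of `J_c = 1 + μ c ∂ₓ²` for `c ≤ 0`. -/
def jc (μ c k : ℝ) : ℝ := 1 + μ * |c| * k ^ 2

/-- The ratio `R_γ(x) = (1 - γ) j_c(x) l(x) / j_b(x)²`. -/
noncomputable def Rgamma (γ a b c μ μ₂ x : ℝ) : ℝ :=
  (1 - γ) * jc μ c x * lSym γ a μ μ₂ x / (jb μ b x) ^ 2

/-- For positive arguments, `coth y ≥ 1`. -/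
lemma coth_ge_one {y : ℝ} (hy : 0 < y) : 1 ≤ coth y := by
  have hs : 0 < Real.sinh y := Real.sinh_pos_iff.2 hy
  rw [coth, le_div_iff₀ hs, one_mul]
  exact (Real.sinh_lt_cosh y).le

/-- Quadratic inequality: for `0 ≤ s' ≤ s`, `1 - s + s² ≥ (1 + s'²)/4`. -/
lemma quad_aux {s s' : ℝ} (h0 : 0 ≤ s') (h : s' ≤ s) : 1/4 + s'^2/4 ≤ 1 - s + s^2 := by
  have h2 : s'^2 ≤ s^2 := pow_le_pow_left₀ h0 h 2
  nlinarith [sq_nonneg (3*s - 2)]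

/-- Lower bound for the symbol `l`: `l(k) ≥ (1/(4γ))(1 + (μ/γ²)k²)`. -/
lemma lSym_ge {γ a μ μ₂ : ℝ} (hγ : 0 < γ) (ha : a ≤ 0) (hμ : 0 < μ) (hμ₂ : 0 < μ₂)
    (k : ℝ) : (1/(4*γ)) * (1 + (μ/γ^2) * k^2) ≤ lSym γ a μ μ₂ k := by
  obtain ⟨M, hM0, rfl⟩ : ∃ M, 0 < M ∧ μ = M^2 :=
    ⟨Real.sqrt μ, Real.sqrt_pos.2 hμ, (Real.sq_sqrt hμ.le).symm⟩
  obtain ⟨N, hN0, rfl⟩ : ∃ N, 0 < N ∧ μ₂ = N^2 :=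
    ⟨Real.sqrt μ₂, Real.sqrt_pos.2 hμ₂, (Real.sq_sqrt hμ₂.le).symm⟩
  have hMs : Real.sqrt (M^2) = M := Real.sqrt_sq hM0.le
  have hNs : Real.sqrt (N^2) = N := Real.sqrt_sq hN0.le
  rcases eq_or_ne k 0 with hk | hk
  · subst hk
    rw [lSym, if_pos rfl, hMs, hNs]
    set s : ℝ := M / (γ * N) with hs
    have hspos : 0 ≤ s := by positivity
    have hq : (1/4 : ℝ) ≤ 1 - s + s^2 := by
      have := quad_aux (le_refl (0:ℝ)) hspos
      nlinarith
    have heq : 1 / γ - M / (γ ^ 2 * N) + M^2 / (γ ^ 3 * N^2) = (1 - s + s^2)/γ := by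
      rw [hs]; field_simp
    rw [heq]
    calc (1/(4*γ)) * (1 + (M^2/γ^2) * (0:ℝ)^2) = (1/4)/γ := by ring
      _ ≤ (1 - s + s^2)/γ := by gcongr
  · rw [lSym, if_neg hk, hMs, hNs]
    have ht : 0 < |k| := abs_pos.2 hk
    set t : ℝ := |k| with htdef
    have hk2 : k^2 = t^2 := (sq_abs k).symm
    set C : ℝ := coth (N * t) with hC
    have hC1 : 1 ≤ C := coth_ge_one (by positivity)
    set s' : ℝ := M * t / γ with hs'
    set s : ℝ := M * t * C / γ with hsdef
    have hs'0 : 0 ≤ s' := by positivity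
    have hs's : s' ≤ s := by
      rw [hs', hsdef]
      gcongr ?_ / γ
      nlinarith [mul_nonneg (mul_pos hM0 ht).le (sub_nonneg.2 hC1)]
    have hq := quad_aux hs'0 hs's
    have h1 : (1/(4*γ)) * (1 + (M^2/γ^2) * k^2) = (1/4 + s'^2/4)/γ := by
      rw [hk2, hs']; field_simp
    have h2 : 1 / γ - (M / γ ^ 2) * (t * C)
        - (M^2 / γ) * (a - (1 / γ ^ 2) * C ^ 2) * k ^ 2
        = (1 - s + s^2)/γ - (M^2/γ) * a * t^2 := by
      rw [hk2, hsdef]; field_simp; ring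
    rw [h1, h2]
    have hpos : 0 ≤ -((M^2/γ) * a * t^2) := by
      have h3 : 0 ≤ M^2/γ := by positivity
      nlinarith [sq_nonneg t, mul_nonneg (mul_nonneg h3 (neg_nonneg.2 ha)) (sq_nonneg t)]
    have hdiv : (1/4 + s'^2/4)/γ ≤ (1 - s + s^2)/γ := by gcongr
    linarith

/-- For `γ ∈ (0,1)`, `b > 0`, `c < 0`, `a ≤ 0`, `μ, μ₂ > 0`, the ratio `R_γ` has a
positive lower bound on `[0, ∞)`. -/
theorem Rgamma_pos_lower_bound (γ a b c μ μ₂ : ℝ) (hγ : γ ∈ Set.Ioo (0 : ℝ) 1)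
    (hb : 0 < b) (hc : c < 0) (ha : a ≤ 0) (hμ : 0 < μ) (hμ₂ : 0 < μ₂) :
    ∃ m > 0, ∀ x : ℝ, 0 ≤ x → m ≤ Rgamma γ a b c μ μ₂ x := by
  obtain ⟨hγ0, hγ1⟩ := hγ
  have hcpos : 0 < |c| := abs_pos.2 hc.ne
  set δ : ℝ := min 1 (min ((|c| + 1/γ^2)/(2*b)) (|c|/(γ^2*b^2))) with hδdef
  have hδpos : 0 < δ :=
    lt_min one_pos (lt_min (by positivity) (by positivity))
  have hδ1 : δ ≤ 1 := min_le_left _ _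
  have hδ2 : 2*b*δ ≤ |c| + 1/γ^2 := by
    have h := (min_le_right 1 _ : δ ≤ _).trans (min_le_left _ _)
    rw [le_div_iff₀ (by positivity : (0:ℝ) < 2*b)] at h
    linarith
  have hδ3 : δ * b^2 ≤ |c| * (1/γ^2) := by
    have h := (min_le_right 1 _ : δ ≤ _).trans (min_le_right _ _)
    rw [le_div_iff₀ (by positivity : (0:ℝ) < γ^2*b^2)] at h
    have hγ2 : (0:ℝ) < γ^2 := by positivity
    rw [mul_one_div, le_div_iff₀ hγ2]
    nlinarith
  have h1γ : 0 < 1 - γ := by linarith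
  refine ⟨(1-γ)/(4*γ)*δ, by positivity, fun x hx => ?_⟩
  have hjb : 0 < jb μ b x := by rw [jb]; positivity
  have hjc : 0 < jc μ c x := by rw [jc]; positivity
  have hl := lSym_ge hγ0 ha hμ hμ₂ x
  rw [Rgamma, le_div_iff₀ (by positivity : (0:ℝ) < jb μ b x ^ 2)]
  have step1 : (1-γ) * jc μ c x * ((1/(4*γ)) * (1 + (μ/γ^2) * x^2))
      ≤ (1-γ) * jc μ c x * lSym γ a μ μ₂ x :=
    mul_le_mul_of_nonneg_left hl (by positivity)
  refine le_trans ?_ step1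
  rw [jb, jc]
  set u : ℝ := μ * x^2 with hu
  have hu0 : 0 ≤ u := by positivity
  have key : δ * (1 + b * u)^2 ≤ (1 + |c| * u) * (1 + (1/γ^2) * u) := by
    nlinarith [mul_nonneg hu0 (sub_nonneg.2 hδ2),
      mul_nonneg (mul_nonneg hu0 hu0) (sub_nonneg.2 hδ3)]
  have h4γ : (0:ℝ) < 4*γ := by linarith
  calc (1-γ)/(4*γ)*δ * (1 + μ*b*x^2)^2
      = (1-γ)/(4*γ) * (δ * (1 + b*u)^2) := by rw [hu]; ring
    _ ≤ (1-γ)/(4*γ) * ((1 + |c| * u) * (1 + (1/γ^2) * u)) :=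
        mul_le_mul_of_nonneg_left key (div_pos h1γ h4γ).le
    _ = (1-γ) * (1 + μ * |c| * x^2) * ((1/(4*γ)) * (1 + (μ/γ^2) * x^2)) := by
        rw [hu]; field_simp
end

section
/- Let γ ∈ (0,1), b > 0, c < 0, a ≤ 0, μ > 0, μ₂ > 0, set j_b(k) = 1 + μ b k², j_c(k) = 1 + μ|c| k², let l(k) be the symbol of L_{μ₂}, and define R_γ(x) = (1 − γ)·j_c(x)·l(x)/j_b(x)². Suppose the wave speed c_s satisfies c_s² < inf_{x ≥ 0} R_γ(x). Then for every real k, the symmetric 2×2 matrix Q̂(k) with rows ((1 − γ)·j_c(k), −c_s·j_b(k)) and (−c_s·j_b(k), l(k)) is positive definite; in particular its determinant δ(k) = (1 − γ)·j_c(k)·l(k) − c_s²·j_b(k)² is strictly positive and both of its (real) eigenvalues are strictly positive. -/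
/-- The Fourier symbol matrix `Q̂(k)` of the operator defining the energy functional
`E_{μ₂}` for solitary waves of speed `c_s`. -/
noncomputable def Qhat (γ a b c μ μ₂ cs k : ℝ) : Matrix (Fin 2) (Fin 2) ℝ :=
  !![(1 - γ) * jc μ c k, -cs * jb μ b k; -cs * jb μ b k, lSym γ a μ μ₂ k]

lemma lSym_abs (γ a μ μ₂ k : ℝ) : lSym γ a μ μ₂ |k| = lSym γ a μ μ₂ k := by
  by_cases hk : k = 0
  · simp [hk]
  · simp [lSym, abs_abs, sq_abs, hk, abs_eq_zero]

lemma Rgamma_abs (γ a b c μ μ₂ k : ℝ) :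
    Rgamma γ a b c μ μ₂ |k| = Rgamma γ a b c μ μ₂ k := by
  simp [Rgamma, jb, jc, sq_abs, lSym_abs]

/-- If `c_s² < inf_{x ≥ 0} R_γ(x)`, then for every real `k` the symbol matrix `Q̂(k)` is
positive definite; in particular its determinant is strictly positive and both of its
real eigenvalues `λ₋(k), λ₊(k)` are strictly positive. -/
theorem Qhat_posDef (γ a b c μ μ₂ cs : ℝ) (hγ : γ ∈ Set.Ioo (0 : ℝ) 1)
    (hb : 0 < b) (hc : c < 0) (ha : a ≤ 0) (hμ : 0 < μ) (hμ₂ : 0 < μ₂)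
    (hcs : cs ^ 2 < sInf ((fun x => Rgamma γ a b c μ μ₂ x) '' Set.Ici 0)) :
    ∀ k : ℝ,
      (Qhat γ a b c μ μ₂ cs k).PosDef ∧
      0 < (1 - γ) * jc μ c k * lSym γ a μ μ₂ k - cs ^ 2 * (jb μ b k) ^ 2 ∧
      0 < (1 / 2) * ((1 - γ) * jc μ c k + lSym γ a μ μ₂ k
            - Real.sqrt (((1 - γ) * jc μ c k - lSym γ a μ μ₂ k) ^ 2
                + 4 * cs ^ 2 * (jb μ b k) ^ 2)) ∧
      0 < (1 / 2) * ((1 - γ) * jc μ c k + lSym γ a μ μ₂ k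
            + Real.sqrt (((1 - γ) * jc μ c k - lSym γ a μ μ₂ k) ^ 2
                + 4 * cs ^ 2 * (jb μ b k) ^ 2)) := by
  intro k
  have hγ0 := hγ.1
  have hγ1 := hγ.2
  have hmem : Rgamma γ a b c μ μ₂ k ∈
      ((fun x => Rgamma γ a b c μ μ₂ x) '' Set.Ici 0) :=
    ⟨|k|, abs_nonneg k, Rgamma_abs γ a b c μ μ₂ k⟩
  have hkey : cs ^ 2 < Rgamma γ a b c μ μ₂ k := by
    by_cases hS : BddBelow ((fun x => Rgamma γ a b c μ μ₂ x) '' Set.Ici 0)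
    · exact lt_of_lt_of_le hcs (csInf_le hS hmem)
    · rw [Real.sInf_of_not_bddBelow hS] at hcs
      exact absurd hcs (not_lt.2 (sq_nonneg cs))
  set A := (1 - γ) * jc μ c k with hA
  set L := lSym γ a μ μ₂ k with hL
  set J := jb μ b k with hJ
  have hJpos : 0 < J := by simp only [hJ, jb]; positivity
  have hjc : 0 < jc μ c k := by
    have : 0 < |c| := abs_pos.2 hc.ne
    simp only [jc]; positivity
  have hApos : 0 < A := mul_pos (by linarith) hjc
  have hdet : 0 < A * L - cs ^ 2 * J ^ 2 := by
    have hJ2 : (0:ℝ) < J ^ 2 := by positivity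
    have := (lt_div_iff₀ hJ2).mp hkey
    rw [hA, hL]
    linarith [this]
  have hLpos : 0 < L := by
    by_contra h
    push_neg at h
    nlinarith [mul_nonneg (sq_nonneg cs) (sq_nonneg J)]
  have hDnn : (0:ℝ) ≤ (A - L) ^ 2 + 4 * cs ^ 2 * J ^ 2 := by positivity
  have hsqrt : Real.sqrt ((A - L) ^ 2 + 4 * cs ^ 2 * J ^ 2) < A + L := by
    have hT : (A - L) ^ 2 + 4 * cs ^ 2 * J ^ 2 < (A + L) ^ 2 := by nlinarith
    calc Real.sqrt ((A - L) ^ 2 + 4 * cs ^ 2 * J ^ 2)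
        < Real.sqrt ((A + L) ^ 2) := Real.sqrt_lt_sqrt hDnn hT
      _ = A + L := Real.sqrt_sq (by linarith)
  have hsqrt_nn := Real.sqrt_nonneg ((A - L) ^ 2 + 4 * cs ^ 2 * J ^ 2)
  refine ⟨?_, hdet, by linarith, by linarith⟩
  rw [Matrix.posDef_iff_dotProduct_mulVec]
  constructor
  · ext i j
    fin_cases i <;> fin_cases j <;>
      simp [Qhat, Matrix.conjTranspose_apply]
  · intro x hx
    have hx01 : x 0 ≠ 0 ∨ x 1 ≠ 0 := by
      by_contra h
      push_neg at h
      exact hx (funext fun i => by fin_cases i <;> simp [h.1, h.2])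
    simp only [Qhat, Matrix.mulVec, dotProduct, Fin.sum_univ_two,
      Matrix.cons_val', Matrix.cons_val_zero, Matrix.cons_val_one, Matrix.head_cons,
      Matrix.empty_val', Matrix.cons_val_fin_one, Matrix.head_fin_const, Matrix.of_apply,
      star_trivial, Pi.star_apply]
    show 0 < x 0 * (A * x 0 + -cs * J * x 1) + x 1 * (-cs * J * x 0 + L * x 1)
    rcases hx01 with h | h
    · rcases eq_or_ne (x 1) 0 with h1 | h1
      · simp only [h1]
        nlinarith [sq_pos_of_ne_zero h, sq_nonneg (x 0)]
      · nlinarith [sq_nonneg (A * x 0 + (-cs * J) * x 1), sq_pos_of_ne_zero h1, mul_pos hdet (sq_pos_of_ne_zero h1)]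
    · nlinarith [sq_nonneg (A * x 0 + (-cs * J) * x 1), sq_pos_of_ne_zero h, mul_pos hdet (sq_pos_of_ne_zero h)]
end

section
/- Let N be an even positive integer, M = N/2, L > 0, and ω_N = e^{−2πi/N}. Let D_N be the N×N real matrix with entries (D_N)_{l j} = Re( (π/(N L)) · Σ_{m=−M}^{M−1} ω_N^{m(j−l)} · i·m ) for 1 ≤ l, j ≤ N, and let D be the flip matrix defined by (D U)_j = U_{N+1−j} for U ∈ ℝ^N. Then D·D_N = −D_N·D; in particular D_N²·D = D·D_N². -/
open Complex in
/-- The Fourier pseudospectral differentiation matrix `D_N` on the uniform grid of `N`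
collocation points of `(-L, L)`, with `(D_N)_{l j} =
Re((π/(NL)) Σ_{m=-N/2}^{N/2-1} ω_N^{m(j-l)} i m)`, `ω_N = exp(-2πi/N)`. -/
noncomputable def DNmat (N : ℕ) (L : ℝ) : Matrix (Fin N) (Fin N) ℝ :=
  fun l j =>
    (((Real.pi / (N * L) : ℝ) : ℂ) *
      ∑ m ∈ Finset.Icc (-((N : ℤ) / 2)) ((N : ℤ) / 2 - 1),
        Complex.exp (-2 * Real.pi * Complex.I / N) ^ (m * ((j : ℤ) - (l : ℤ)))
          * (Complex.I * m)).re

/-- The reflection (flip) matrix `D` on `ℝ^N`, `(D U)_j = U_{N+1-j}` (1-indexed). -/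
def flipMat (N : ℕ) : Matrix (Fin N) (Fin N) ℝ :=
  fun l j => if (l : ℕ) + (j : ℕ) = N - 1 then 1 else 0

/-!
`(D_N)_{l j}` depends only on `j - l`, and negating that offset conjugates each `ω_N`-power
(since `|ω_N| = 1`) while the weights `i m` are purely imaginary, so the complex sum turns into
minus its conjugate and its real part changes sign. The flip reverses the row index from the left
and the column index from the right, and `j - rev l = -(rev j - l)` gives `D D_N = -D_N D`.
Anticommuting with `D_N` makes `D` commute with `D_N²`.
-/

theorem sq_mul_eq_mul_sq_of_mul_eq_neg {R : Type*} [Ring R] {a b : R}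
    (h : a * b = -(b * a)) : b ^ 2 * a = a * b ^ 2 := by
  have h' : b * a = -(a * b) := by rw [h, neg_neg]
  rw [sq, mul_assoc, h', mul_neg, ← mul_assoc, h', neg_mul, neg_neg, mul_assoc]

open Complex ComplexConjugate in
theorem Complex.conj_exp_ofReal_mul_I (x : ℝ) : conj (exp (x * I)) = (exp (x * I))⁻¹ := by
  rw [← exp_conj, ← exp_neg, map_mul, conj_ofReal, conj_I, mul_neg]

open Complex ComplexConjugate in
theorem re_ofReal_mul_sum_zpow_neg_mul_I {s : Finset ℤ} {ω : ℂ} (hω : conj ω = ω⁻¹)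
    (r : ℝ) (e : ℤ) :
    ((r : ℂ) * ∑ m ∈ s, ω ^ (m * -e) * (I * m)).re
      = -((r : ℂ) * ∑ m ∈ s, ω ^ (m * e) * (I * m)).re := by
  have : (r : ℂ) * ∑ m ∈ s, ω ^ (m * -e) * (I * m)
      = -conj ((r : ℂ) * ∑ m ∈ s, ω ^ (m * e) * (I * m)) := by
    simp only [map_mul, map_sum, map_zpow₀, hω, conj_ofReal, conj_I, map_intCast, inv_zpow,
      ← zpow_neg, mul_neg, neg_mul, Finset.sum_neg_distrib, neg_neg]
  rw [this, neg_re, conj_re]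

theorem DNmat_apply_eq_neg {N : ℕ} (L : ℝ) {a b c d : Fin N}
    (h : (b : ℤ) - a = -((d : ℤ) - c)) : DNmat N L a b = -DNmat N L c d := by
  have hω : Complex.exp (-2 * Real.pi * Complex.I / N)
      = Complex.exp ((-2 * Real.pi / N : ℝ) * Complex.I) := by
    push_cast
    ring_nf
  simp only [DNmat, h, hω]
  exact re_ofReal_mul_sum_zpow_neg_mul_I (Complex.conj_exp_ofReal_mul_I _) _ _

theorem DNmat_rev_apply {N : ℕ} (L : ℝ) (l j : Fin N) :
    DNmat N L l.rev j = -DNmat N L l j.rev := by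
  apply DNmat_apply_eq_neg
  have hl := l.isLt
  have hj := j.isLt
  simp only [Fin.val_rev]
  omega

theorem flipMat_apply {N : ℕ} (l j : Fin N) : flipMat N l j = if j = l.rev then 1 else 0 := by
  simp only [flipMat, Fin.ext_iff, Fin.val_rev]
  exact if_congr (by omega) rfl rfl

theorem flipMat_mul_apply {N : ℕ} (A : Matrix (Fin N) (Fin N) ℝ) (l j : Fin N) :
    (flipMat N * A) l j = A l.rev j := by
  simp [Matrix.mul_apply, flipMat_apply, ite_mul]

theorem mul_flipMat_apply {N : ℕ} (A : Matrix (Fin N) (Fin N) ℝ) (l j : Fin N) :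
    (A * flipMat N) l j = A l j.rev := by
  simp [Matrix.mul_apply, flipMat_apply, mul_ite, ← Fin.rev_eq_iff]

theorem flip_anticommutes_DN_general (N : ℕ) (L : ℝ) :
    flipMat N * DNmat N L = -(DNmat N L * flipMat N) ∧
      (DNmat N L) ^ 2 * flipMat N = flipMat N * (DNmat N L) ^ 2 := by
  have h : flipMat N * DNmat N L = -(DNmat N L * flipMat N) := by
    ext l j
    rw [flipMat_mul_apply, Matrix.neg_apply, mul_flipMat_apply, DNmat_rev_apply]
  exact ⟨h, sq_mul_eq_mul_sq_of_mul_eq_neg h⟩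

/-- For even `N` and `L > 0`, the flip matrix anticommutes with the pseudospectral
differentiation matrix: `D D_N = -D_N D`; in particular `D_N² D = D D_N²`. -/
theorem flip_anticommutes_DN (N : ℕ) (hN : 0 < N) (hNe : Even N) (L : ℝ) (hL : 0 < L) :
    flipMat N * DNmat N L = -(DNmat N L * flipMat N) ∧
      (DNmat N L) ^ 2 * flipMat N = flipMat N * (DNmat N L) ^ 2 :=
  flip_anticommutes_DN_general N L
end
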